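/- arXiv:1305.2970 — 3 statements merged into one kernel-verified Lean document; each statement's English description precedes it below -/
import Mathlib

section
/- Let K ⊆ ℝ^n be a nonempty compact set, let A ⊆ ℕ^n be finite, and let c, a_1, …, a_m ∈ ℝ[x]_A. Suppose there is no nonzero a ∈ span{a_1,…,a_m} with a ≥ 0 on K. If there is no λ ∈ ℝ^m with c − λ_1 a_1 − ⋯ − λ_m a_m ∈ P_A(K), then there exists y ∈ R_A(K) with ⟨c, y⟩ < 0 and ⟨a_i, y⟩ = 0 for all i = 1,…,m. -/
open MeasureTheory MvPolynomial Finset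

noncomputable section

/-- Exponent vectors `α ∈ ℕ^n`. -/
abbrev Exp (n : ℕ) := Fin n → ℕ

/-- Evaluation of the monomial `x^α` at a point `u ∈ ℝ^n`. -/
def monoEval {n : ℕ} (α : Exp n) (u : Fin n → ℝ) : ℝ := ∏ i, u i ^ α i

/-- A polynomial in `ℝ[x]_A` is identified with its coefficient vector `p : A → ℝ`;
this is its evaluation at `u`. -/
def evalA {n : ℕ} (A : Finset (Exp n)) (p : A → ℝ) (u : Fin n → ℝ) : ℝ :=
  ∑ α : A, p α * monoEval (α : Exp n) u

/-- The pairing `⟨p, y⟩ = ∑_{α ∈ A} p_α y_α` between `ℝ[x]_A` and `ℝ^A`. -/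
def pairA {n : ℕ} (A : Finset (Exp n)) (p y : A → ℝ) : ℝ :=
  ∑ α : A, p α * y α

/-- The cone `P_A(K)` of polynomials in `ℝ[x]_A` nonnegative on `K`. -/
def PAcone {n : ℕ} (A : Finset (Exp n)) (K : Set (Fin n → ℝ)) : Set (A → ℝ) :=
  {p | ∀ u ∈ K, 0 ≤ evalA A p u}

/-- The cone `R_A(K)` of A-truncated moment sequences admitting a representing
(positive Borel) measure supported in `K`. -/
def RAcone {n : ℕ} (A : Finset (Exp n)) (K : Set (Fin n → ℝ)) : Set (A → ℝ) :=
  {y | ∃ μ : Measure (Fin n → ℝ), μ Kᶜ = 0 ∧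
        ∀ α : A, Integrable (monoEval (α : Exp n)) μ ∧
                 y α = ∫ u, monoEval (α : Exp n) u ∂μ}

/-- `ℝ[x]_A` is `K`-full: some `p ∈ ℝ[x]_A` is strictly positive on `K`. -/
def KFull {n : ℕ} (A : Finset (Exp n)) (K : Set (Fin n → ℝ)) : Prop :=
  ∃ p : A → ℝ, ∀ u ∈ K, 0 < evalA A p u

/-- The semialgebraic set `K = {x : h(x) = 0, g(x) ≥ 0}`. -/
def semiK {n m1 m2 : ℕ} (h : Fin m1 → MvPolynomial (Fin n) ℝ)
    (g : Fin m2 → MvPolynomial (Fin n) ℝ) : Set (Fin n → ℝ) :=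
  {x | (∀ i, eval x (h i) = 0) ∧ (∀ j, 0 ≤ eval x (g j))}

/-- `I_{2k}(h) = h_1 ℝ[x]_{2k - deg h_1} + ⋯ + h_{m1} ℝ[x]_{2k - deg h_{m1}}`. -/
def IhSet {n m1 : ℕ} (h : Fin m1 → MvPolynomial (Fin n) ℝ) (k : ℕ) :
    Set (MvPolynomial (Fin n) ℝ) :=
  {p | ∃ q : Fin m1 → MvPolynomial (Fin n) ℝ,
        (∀ i, q i = 0 ∨ (h i).totalDegree + (q i).totalDegree ≤ 2 * k) ∧
        p = ∑ i, h i * q i}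

/-- `Q_k(g) = Σ_{n,2k} + g_1 Σ_{n,2k-deg g_1} + ⋯ + g_{m2} Σ_{n,2k-deg g_{m2}}`. -/
def QgSet {n m2 : ℕ} (g : Fin m2 → MvPolynomial (Fin n) ℝ) (k : ℕ) :
    Set (MvPolynomial (Fin n) ℝ) :=
  {p | ∃ σ₀ : MvPolynomial (Fin n) ℝ, ∃ σ : Fin m2 → MvPolynomial (Fin n) ℝ,
        IsSumSq σ₀ ∧ σ₀.totalDegree ≤ 2 * k ∧
        (∀ j, IsSumSq (σ j) ∧ (σ j = 0 ∨ (g j).totalDegree + (σ j).totalDegree ≤ 2 * k)) ∧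
        p = σ₀ + ∑ j, g j * σ j}

/-- The truncated preordering `I_{2k}(h) + Q_k(g)`. -/
def IQSet {n m1 m2 : ℕ} (h : Fin m1 → MvPolynomial (Fin n) ℝ)
    (g : Fin m2 → MvPolynomial (Fin n) ℝ) (k : ℕ) : Set (MvPolynomial (Fin n) ℝ) :=
  {p | ∃ a ∈ IhSet h k, ∃ b ∈ QgSet g k, p = a + b}

/-- `I(h) + Q(g)` is archimedean: `R - ‖x‖² ∈ I_{2k}(h) + Q_k(g)` for some `R > 0` and `k`. -/
def ArchQM {n m1 m2 : ℕ} (h : Fin m1 → MvPolynomial (Fin n) ℝ)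
    (g : Fin m2 → MvPolynomial (Fin n) ℝ) : Prop :=
  ∃ R : ℝ, 0 < R ∧ ∃ k : ℕ, (C R - ∑ i : Fin n, X i ^ 2) ∈ IQSet h g k

/-- The Riesz functional `L_z(p) = ∑_α p_α z_α` of a (truncated) moment sequence `z`. -/
def riesz {n : ℕ} (z : Exp n → ℝ) (p : MvPolynomial (Fin n) ℝ) : ℝ :=
  ∑ α ∈ p.support, coeff α p * z α

/-- `Φ_k(g)`: all localizing matrices `L_{g_j}^{(k)}(z) ⪰ 0` for `j = 0,1,…,m2`
(with `g_0 = 1`), expressed via the quadratic forms `L_z(g_j p²) ≥ 0`. -/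
def PhiSet {n m2 : ℕ} (g : Fin m2 → MvPolynomial (Fin n) ℝ) (k : ℕ) : Set (Exp n → ℝ) :=
  {z | (∀ p : MvPolynomial (Fin n) ℝ, (p ^ 2).totalDegree ≤ 2 * k → 0 ≤ riesz z (p ^ 2)) ∧
       (∀ j, ∀ p : MvPolynomial (Fin n) ℝ,
          (g j * p ^ 2).totalDegree ≤ 2 * k → 0 ≤ riesz z (g j * p ^ 2))}

/-- `E_k(h)`: all localizing matrices `L_{h_i}^{(k)}(z) = 0`, expressed via the
vanishing of the quadratic forms `L_z(h_i p²)`. -/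
def ESet {n m1 : ℕ} (h : Fin m1 → MvPolynomial (Fin n) ℝ) (k : ℕ) : Set (Exp n → ℝ) :=
  {z | ∀ i, ∀ p : MvPolynomial (Fin n) ℝ,
        (h i * p ^ 2).totalDegree ≤ 2 * k → riesz z (h i * p ^ 2) = 0}

/-- Restriction `z|_A` of a moment sequence to the indices in `A`. -/
def restrA {n : ℕ} (A : Finset (Exp n)) (z : Exp n → ℝ) : A → ℝ := fun α => z α

/-- `deg(A) = max { |α| : α ∈ A }`. -/
def degA {n : ℕ} (A : Finset (Exp n)) : ℕ := A.sup fun α => ∑ i, α i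

/-- The polynomial `∑_{α ∈ A} p_α x^α` associated to a coefficient vector `p : A → ℝ`. -/
def toPoly {n : ℕ} (A : Finset (Exp n)) (p : A → ℝ) : MvPolynomial (Fin n) ℝ :=
  ∑ α : A, monomial (Finsupp.equivFunOnFinite.symm (α : Exp n)) (p α)

/-- `c(λ) = c - λ_1 a_1 - ⋯ - λ_m a_m` (as coefficient vectors in `ℝ[x]_A`). -/
def cLam {n m : ℕ} {A : Finset (Exp n)} (c : A → ℝ) (a : Fin m → (A → ℝ))
    (lam : Fin m → ℝ) : A → ℝ :=
  c - ∑ i, lam i • a i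

/-- Feasibility of `w` for the `k`-th primal relaxation (4.3). -/
def RelaxFeas {n m1 m2 m : ℕ} (h : Fin m1 → MvPolynomial (Fin n) ℝ)
    (g : Fin m2 → MvPolynomial (Fin n) ℝ) (A : Finset (Exp n))
    (a : Fin m → (A → ℝ)) (b : Fin m → ℝ) (k : ℕ) (w : Exp n → ℝ) : Prop :=
  w ∈ PhiSet g k ∩ ESet h k ∧ ∀ i, pairA A (a i) (restrA A w) = b i

/-- `w` is a minimizer of the `k`-th primal relaxation (4.3). -/
def RelaxMin {n m1 m2 m : ℕ} (h : Fin m1 → MvPolynomial (Fin n) ℝ)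
    (g : Fin m2 → MvPolynomial (Fin n) ℝ) (A : Finset (Exp n)) (c : A → ℝ)
    (a : Fin m → (A → ℝ)) (b : Fin m → ℝ) (k : ℕ) (w : Exp n → ℝ) : Prop :=
  RelaxFeas h g A a b k w ∧
  ∀ w' : Exp n → ℝ, RelaxFeas h g A a b k w' →
    pairA A c (restrA A w) ≤ pairA A c (restrA A w')

/-- The exponents `α ∈ ℕ^n` with `|α| ≤ r`, as a finite set. -/
def expSet (n r : ℕ) : Finset (Exp n) :=
  (Fintype.piFinset fun _ : Fin n => Finset.range (r + 1)).filter fun α => ∑ i, α i ≤ r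

/-- The `r`-th order moment matrix `M_r(z)`, with rows and columns indexed by
exponents of degree `≤ r` and entries `z_{α+β}`. -/
def momMat {n : ℕ} (z : Exp n → ℝ) (r : ℕ) :
    Matrix (expSet n r) (expSet n r) ℝ :=
  fun α β => z ((α : Exp n) + (β : Exp n))

/-- The degree bound `d_K = max{1, ⌈deg h_i / 2⌉, ⌈deg g_j / 2⌉}`. -/
def dKnum {n m1 m2 : ℕ} (h : Fin m1 → MvPolynomial (Fin n) ℝ)
    (g : Fin m2 → MvPolynomial (Fin n) ℝ) : ℕ :=
  max 1 (max (Finset.univ.sup fun i => ((h i).totalDegree + 1) / 2)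
             (Finset.univ.sup fun j => ((g j).totalDegree + 1) / 2))

/-- The truncation `z|_{2t}` is flat: the localizing conditions hold at order `t`
and `rank M_{t - d_K}(z) = rank M_t(z)`. -/
def IsFlat {n m1 m2 : ℕ} (h : Fin m1 → MvPolynomial (Fin n) ℝ)
    (g : Fin m2 → MvPolynomial (Fin n) ℝ) (t : ℕ) (z : Exp n → ℝ) : Prop :=
  z ∈ PhiSet g t ∩ ESet h t ∧
  (momMat z (t - dKnum h g)).rank = (momMat z t).rank

/-- `u` is a KKT point of `min f(x) s.t. h(x) = 0, g(x) ≥ 0`. -/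
def IsKKT {n m1 m2 : ℕ} (h : Fin m1 → MvPolynomial (Fin n) ℝ)
    (g : Fin m2 → MvPolynomial (Fin n) ℝ) (f : MvPolynomial (Fin n) ℝ)
    (u : Fin n → ℝ) : Prop :=
  u ∈ semiK h g ∧ ∃ μ : Fin m1 → ℝ, ∃ ν : Fin m2 → ℝ,
    (∀ j, 0 ≤ ν j) ∧ (∀ j, ν j * eval u (g j) = 0) ∧
    ∀ l : Fin n, eval u (pderiv l f) =
      ∑ i, μ i * eval u (pderiv l (h i)) + ∑ j, ν j * eval u (pderiv l (g j))

/-! Let `C ⊆ ℝ^A` be the convex cone generated by the moment vectors `(u^α)_{α ∈ A}` of the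
points `u ∈ K`; its elements are moment vectors of finitely atomic measures on `K`, so `C ⊆ R_A(K)`.
If the conclusion fails, `⟨c, y⟩ ≥ 0` for every `y ∈ C` with `⟨a_i, y⟩ = 0` for all `i`. Choose a
basis `b` of `V = span{a_i}`. The cone `{((⟨b_j, y⟩)_j, ⟨c, y⟩ + t) : y ∈ C, t > 0}` lives in a
finite-dimensional space and misses the origin, so a nonzero functional `(ν, t₀)` is nonnegative
on it. If `t₀ = 0`, then `∑ ν_j b_j ∈ V` is nonnegative on `K`, hence zero, which forces `ν = 0`.
So `t₀ > 0`, and `c + t₀⁻¹ ∑ ν_j b_j` is nonnegative on `K`: a feasible `λ` after all. -/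

theorem nonneg_of_forall_pos_nonneg_add_mul {s a : ℝ} (h : ∀ t : ℝ, 0 < t → 0 ≤ s + a * t) :
    0 ≤ s := by
  have hlim : Filter.Tendsto (fun t => s + a * t) (nhdsWithin 0 (Set.Ioi 0)) (nhds s) := by
    have : Continuous fun t : ℝ => s + a * t := by fun_prop
    simpa using this.continuousWithinAt (s := Set.Ioi 0) (x := 0) |>.tendsto
  exact ge_of_tendsto hlim (eventually_nhdsWithin_of_forall h)

theorem ContinuousLinearMap.apply_prod_eq_sum {r : ℕ} (f : StrongDual ℝ ((Fin r → ℝ) × ℝ))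
    (w : Fin r → ℝ) (s : ℝ) :
    f (w, s) = ∑ j, w j * f (fun k => if j = k then 1 else 0, 0) + s * f (0, 1) := by
  have hw : f (w, 0) = ∑ j, w j * f (fun k => if j = k then 1 else 0, 0) :=
    LinearMap.pi_apply_eq_sum_univ (f.toLinearMap ∘ₗ LinearMap.inl ℝ _ _) w
  have hs : f (0, s) = s * f (0, 1) := by
    rw [← smul_eq_mul, ← map_smul, Prod.smul_mk, smul_zero, smul_eq_mul, mul_one]
  rw [← hw, ← hs, ← map_add, Prod.mk_add_mk, add_zero, zero_add]

theorem ConvexCone.exists_ne_zero_forall_nonneg {E : Type*} [NormedAddCommGroup E]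
    [NormedSpace ℝ E] [FiniteDimensional ℝ E] (U : ConvexCone ℝ E) (hne : (U : Set E).Nonempty)
    (h0 : (0 : E) ∉ U) : ∃ f : StrongDual ℝ E, f ≠ 0 ∧ ∀ x ∈ U, 0 ≤ f x := by
  by_cases hspan : vectorSpan ℝ (U : Set E) = ⊤
  · have hint : (interior (U : Set E)).Nonempty := by
      rwa [U.convex.interior_nonempty_iff_affineSpan_eq_top,
        AffineSubspace.affineSpan_eq_top_iff_vectorSpan_eq_top_of_nonempty ℝ E E hne]
    obtain ⟨f, hf, hfU⟩ :=
      geometric_hahn_banach_of_nonempty_interior_point U.convex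
        (fun h => h0 (interior_subset h)) hint
    exact ⟨-f, neg_ne_zero.2 hf, fun x hx => by simpa using hfU x hx⟩
  · obtain ⟨f, hf, hfU⟩ := Submodule.exists_dual_map_eq_bot_of_lt_top
      (lt_top_iff_ne_top.2 hspan) inferInstance
    refine ⟨LinearMap.toContinuousLinearMap f, by simpa using hf, fun x hx => ?_⟩
    -- `x = 2 • x - x` lies in the vector span, which `f` kills.
    have hx : x ∈ vectorSpan ℝ (U : Set E) := by
      simpa [two_smul] using vsub_mem_vectorSpan ℝ (U.smul_mem two_pos hx) hx
    have : f x = 0 := LinearMap.le_ker_iff_map.2 hfU hx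
    simp [this]

section Duality

variable {E F : Type*} [AddCommGroup E] [Module ℝ E] [AddCommGroup F] [Module ℝ F]

def PointedCone.mapAddRay (C : PointedCone ℝ E) (Φ : E →ₗ[ℝ] F) (v : F) : ConvexCone ℝ F where
  carrier := {x | ∃ y ∈ C, ∃ t : ℝ, 0 < t ∧ x = Φ y + t • v}
  smul_mem' := by
    rintro l hl _ ⟨y, hy, t, ht, rfl⟩
    exact ⟨l • y, C.smul_mem hl.le hy, l * t, mul_pos hl ht, by simp [smul_add, mul_smul]⟩
  add_mem' := by
    rintro _ ⟨y, hy, t, ht, rfl⟩ _ ⟨y', hy', t', ht', rfl⟩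
    exact ⟨y + y', C.add_mem hy hy', t + t', add_pos ht ht', by rw [map_add, add_smul]; abel⟩

variable {P : Type*} [AddCommGroup P] [Module ℝ P]

theorem PointedCone.exists_mem_forall_nonneg_add (B : P →ₗ[ℝ] E →ₗ[ℝ] ℝ) (C : PointedCone ℝ E)
    (c : P) (V : Submodule ℝ P) [FiniteDimensional ℝ V]
    (hperp : ∀ y ∈ C, (∀ p ∈ V, B p y = 0) → 0 ≤ B c y)
    (hslater : ∀ p ∈ V, (∀ y ∈ C, 0 ≤ B p y) → p = 0) :
    ∃ p ∈ V, ∀ y ∈ C, 0 ≤ B (c + p) y := by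
  let b := Module.finBasis ℝ V
  let Φ : E →ₗ[ℝ] (Fin (Module.finrank ℝ V) → ℝ) × ℝ :=
    (LinearMap.pi fun j => B (b j)).prod (B c)
  have hΦ : ∀ y t, Φ y + t • (0, 1) = (fun j => B (b j) y, B c y + t) := fun y t =>
    Prod.ext (funext fun j => by simp [Φ]) (by simp [Φ])
  have hU0 : 0 ∉ C.mapAddRay Φ (0, 1) := by
    rintro ⟨y, hy, t, ht, hyt⟩
    rw [hΦ, Prod.ext_iff, funext_iff] at hyt
    have hb : (B.flip y).comp V.subtype = 0 := b.ext fun j => (hyt.1 j).symm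
    have hV : ∀ p ∈ V, B p y = 0 := fun p hp => LinearMap.congr_fun hb ⟨p, hp⟩
    have hc : 0 = B c y + t := hyt.2
    linarith [hperp y hy hV]
  obtain ⟨f, hf0, hfU⟩ :=
    (C.mapAddRay Φ (0, 1)).exists_ne_zero_forall_nonneg ⟨_, 0, C.zero_mem, 1, one_pos, rfl⟩ hU0
  obtain ⟨ν, t₀, hf⟩ : ∃ (ν : Fin (Module.finrank ℝ V) → ℝ) (t₀ : ℝ),
      ∀ w s, f (w, s) = ∑ j, w j * ν j + s * t₀ := ⟨_, _, f.apply_prod_eq_sum⟩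
  let p₀ : V := ∑ j, ν j • b j
  have hpos : ∀ y ∈ C, ∀ t : ℝ, 0 < t → 0 ≤ (B p₀ y + t₀ * B c y) + t₀ * t := by
    intro y hy t ht
    have := hfU _ ⟨y, hy, t, ht, rfl⟩
    rw [hΦ, hf] at this
    simpa [p₀, LinearMap.sum_apply, mul_comm, mul_add, add_assoc] using this
  have ht₀ : 0 ≤ t₀ := by simpa using hpos 0 C.zero_mem 1 one_pos
  have hp₀ : ∀ y ∈ C, 0 ≤ B p₀ y + t₀ * B c y := fun y hy =>
    nonneg_of_forall_pos_nonneg_add_mul (hpos y hy)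
  rcases ht₀.eq_or_lt with ht₀ | ht₀
  · have hp₀0 : p₀ = 0 := Subtype.ext <| hslater _ p₀.2 fun y hy => by
      simpa [← ht₀] using hp₀ y hy
    have hν : ∀ j, ν j = 0 := Fintype.linearIndependent_iff.1 b.linearIndependent ν hp₀0
    exact absurd (ContinuousLinearMap.ext fun ⟨w, s⟩ => by simp [hf, hν, ← ht₀]) hf0
  · refine ⟨(t₀⁻¹ • p₀ : V), (t₀⁻¹ • p₀).2, fun y hy => ?_⟩
    calc 0 ≤ t₀⁻¹ * (B p₀ y + t₀ * B c y) := mul_nonneg (inv_nonneg.2 ht₀.le) (hp₀ y hy)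
      _ = B (c + ↑(t₀⁻¹ • p₀)) y := by
        simp only [Submodule.coe_smul, map_add, map_smul, LinearMap.add_apply,
          LinearMap.smul_apply, smul_eq_mul]
        field_simp
        ring

end Duality

section Moments

variable {n : ℕ}

def momentVector (A : Finset (Exp n)) (u : Fin n → ℝ) : A → ℝ := fun α => monoEval α u

theorem evalA_eq_dotProduct (A : Finset (Exp n)) (p : A → ℝ) (u : Fin n → ℝ) :
    evalA A p u = p ⬝ᵥ momentVector A u := rfl

def RAcone.pointedCone (A : Finset (Exp n)) (K : Set (Fin n → ℝ)) : PointedCone ℝ (A → ℝ) where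
  carrier := RAcone A K
  zero_mem' := ⟨0, rfl, fun _ => ⟨integrable_zero_measure, by simp⟩⟩
  add_mem' := by
    rintro _ _ ⟨μ₁, hμ₁K, hμ₁⟩ ⟨μ₂, hμ₂K, hμ₂⟩
    refine ⟨μ₁ + μ₂, by simp [hμ₁K, hμ₂K], fun α => ⟨(hμ₁ α).1.add_measure (hμ₂ α).1, ?_⟩⟩
    rw [integral_add_measure (hμ₁ α).1 (hμ₂ α).1, Pi.add_apply, (hμ₁ α).2, (hμ₂ α).2]
  smul_mem' := by
    rintro l _ ⟨μ, hμK, hμ⟩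
    refine ⟨ENNReal.ofReal l • μ, by simp [hμK], fun α =>
      ⟨(hμ α).1.smul_measure ENNReal.ofReal_ne_top, ?_⟩⟩
    rw [integral_smul_measure, ENNReal.toReal_ofReal l.2, Pi.smul_apply, (hμ α).2,
      ← Nonneg.coe_smul]

theorem momentVector_mem_RAcone {A : Finset (Exp n)} {K : Set (Fin n → ℝ)} {u : Fin n → ℝ}
    (hu : u ∈ K) : momentVector A u ∈ RAcone A K := by
  refine ⟨Measure.dirac u, ?_, fun α => ⟨integrable_dirac ENNReal.coe_lt_top, ?_⟩⟩
  · rw [Measure.dirac_apply]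
    simp [hu]
  · exact (integral_dirac _ u).symm

theorem hull_momentVector_le_RAcone (A : Finset (Exp n)) (K : Set (Fin n → ℝ)) :
    PointedCone.hull ℝ (momentVector A '' K) ≤ RAcone.pointedCone A K :=
  Submodule.span_le.2 <| Set.image_subset_iff.2 fun _ => momentVector_mem_RAcone

end Moments

theorem statement_16_general {n m : ℕ} {A : Finset (Exp n)} {K : Set (Fin n → ℝ)}
    (c : A → ℝ) (a : Fin m → (A → ℝ))
    (hspan : ∀ μ : Fin m → ℝ, (∀ u ∈ K, 0 ≤ evalA A (∑ i, μ i • a i) u) →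
      (∑ i, μ i • a i) = 0)
    (hinf : ¬ ∃ lam : Fin m → ℝ, cLam c a lam ∈ PAcone A K) :
    ∃ y ∈ RAcone A K, pairA A c y < 0 ∧ ∀ i, pairA A (a i) y = 0 := by
  by_contra! hgoal
  let C := PointedCone.hull ℝ (momentVector A '' K)
  let V := Submodule.span ℝ (Set.range a)
  have hmoment : ∀ u ∈ K, momentVector A u ∈ C := fun u hu => PointedCone.subset_hull ⟨u, hu, rfl⟩
  have hV : ∀ p ∈ V, ∃ μ : Fin m → ℝ, ∑ i, μ i • a i = p :=
    fun p hp => (Submodule.mem_span_range_iff_exists_fun ℝ).1 hp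
  have hperp : ∀ y ∈ C, (∀ p ∈ V, p ⬝ᵥ y = 0) → 0 ≤ c ⬝ᵥ y := by
    intro y hy hy0
    by_contra! hneg
    obtain ⟨i, hi⟩ := hgoal y (hull_momentVector_le_RAcone A K hy) hneg
    exact hi (hy0 _ (Submodule.subset_span ⟨i, rfl⟩))
  have hslater : ∀ p ∈ V, (∀ y ∈ C, 0 ≤ p ⬝ᵥ y) → p = 0 := by
    intro p hp hpos
    obtain ⟨μ, rfl⟩ := hV p hp
    exact hspan μ fun u hu => hpos _ (hmoment u hu)
  obtain ⟨p, hp, hnonneg⟩ :=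
    PointedCone.exists_mem_forall_nonneg_add (dotProductBilin ℝ ℝ) C c V hperp hslater
  obtain ⟨κ, rfl⟩ := hV p hp
  refine hinf ⟨-κ, fun u hu => ?_⟩
  have hcl : cLam c a (-κ) = c + ∑ i, κ i • a i := by simp [cLam, sub_eq_add_neg]
  rw [hcl, evalA_eq_dotProduct]
  exact hnonneg _ (hmoment u hu)

/-- If no nonzero `a ∈ span{a_1,…,a_m}` is nonnegative on the
nonempty compact set `K` and (4.2) is infeasible, then there is `y ∈ R_A(K)` with
`⟨c, y⟩ < 0` and `⟨a_i, y⟩ = 0` for all `i`. -/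
theorem statement_16 {n m : ℕ} (hn : 1 ≤ n) {A : Finset (Exp n)} (hA : A.Nonempty)
    {K : Set (Fin n → ℝ)} (hKne : K.Nonempty) (hKcpt : IsCompact K)
    (c : A → ℝ) (a : Fin m → (A → ℝ))
    (hspan : ∀ μ : Fin m → ℝ, (∀ u ∈ K, 0 ≤ evalA A (∑ i, μ i • a i) u) →
      (∑ i, μ i • a i) = 0)
    (hinf : ¬ ∃ lam : Fin m → ℝ, cLam c a lam ∈ PAcone A K) :
    ∃ y ∈ RAcone A K, pairA A c y < 0 ∧ ∀ i, pairA A (a i) y = 0 :=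
  statement_16_general c a hspan hinf
end
end

section
/- Let K ⊆ ℝ^n be a nonempty compact set, let A ⊆ ℕ^n be finite, and let c, a_1, …, a_m ∈ ℝ[x]_A. Suppose there is no nonzero a ∈ span{a_1,…,a_m} with a ≥ 0 on K. Then the intersection of P_A(K) with the affine subspace c + span{a_1,…,a_m} is bounded: there exists T > 0 such that every p ∈ P_A(K) of the form p = c − λ_1 a_1 − ⋯ − λ_m a_m (λ ∈ ℝ^m) satisfies ‖p‖₂ ≤ T, where ‖p‖₂ is the Euclidean norm of the coefficient vector of p. -/
/-!
Inside `V = span{a_1,…,a_m}`, the polynomials `c - v ∈ P_A(K)` are the `v ∈ V` satisfying the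
linear inequalities `v(u) ≤ c(u)`, `u ∈ K`. Their recession cone `{v ∈ V : v ≤ 0 on K}` is `{0}`
by hypothesis, and in finite dimension a set cut out by linear inequalities with trivial
recession cone is bounded: normalizing an unbounded sequence in it produces, by compactness of
the unit sphere, a unit vector of the recession cone.
-/

open MeasureTheory MvPolynomial Finset

noncomputable section

open Filter Topology

def evalALinear {n : ℕ} (A : Finset (Exp n)) (u : Fin n → ℝ) : (A → ℝ) →ₗ[ℝ] ℝ where
  toFun p := evalA A p u
  map_add' p q := by simp only [evalA, Pi.add_apply, add_mul, Finset.sum_add_distrib]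
  map_smul' r p := by simp only [evalA, Pi.smul_apply, smul_eq_mul, Finset.mul_sum, mul_assoc,
    RingHom.id_apply]

theorem isBounded_setOf_forall_le {E ι : Type*} [NormedAddCommGroup E] [NormedSpace ℝ E]
    [FiniteDimensional ℝ E] (ℓ : ι → E →ₗ[ℝ] ℝ) (b : ι → ℝ)
    (hℓ : ∀ v, (∀ i, ℓ i v ≤ 0) → v = 0) :
    Bornology.IsBounded {v | ∀ i, ℓ i v ≤ b i} := by
  by_contra hunb
  have hlarge : ∀ k : ℕ, ∃ v ∈ {v | ∀ i, ℓ i v ≤ b i}, (k : ℝ) < ‖v‖ := by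
    intro k
    by_contra! h
    exact hunb (isBounded_iff_forall_norm_le.2 ⟨k, h⟩)
  choose v hv hvk using hlarge
  have hpos : ∀ k, 0 < ‖v k‖ := fun k => (Nat.cast_nonneg k).trans_lt (hvk k)
  obtain ⟨w, hw, φ, hφ, hlim⟩ := (isCompact_sphere (0 : E) 1).tendsto_subseq
    (x := fun k => ‖v k‖⁻¹ • v k) fun k => by simp [norm_smul, (hpos k).ne']
  have hinv : Tendsto (fun k => ‖v (φ k)‖⁻¹) atTop (𝓝 0) :=
    tendsto_inv_atTop_zero.comp <| tendsto_atTop_mono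
      (fun k => (Nat.cast_le.2 (hφ.id_le k)).trans (hvk (φ k)).le) tendsto_natCast_atTop_atTop
  have hw0 : w = 0 := hℓ w fun i => by
    have hℓw : Tendsto (fun k => ℓ i (‖v (φ k)‖⁻¹ • v (φ k))) atTop (𝓝 (ℓ i w)) :=
      ((ℓ i).continuous_of_finiteDimensional.tendsto w).comp hlim
    have hbound : Tendsto (fun k => ‖v (φ k)‖⁻¹ * b i) atTop (𝓝 0) := by
      simpa using hinv.mul_const (b i)
    refine le_of_tendsto_of_tendsto hℓw hbound (Eventually.of_forall fun k => ?_)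
    simp only [map_smul, smul_eq_mul]
    exact mul_le_mul_of_nonneg_left (hv (φ k) i) (inv_nonneg.2 (norm_nonneg _))
  simp [hw0] at hw

theorem isBounded_range_cLam_inter_PAcone {n m : ℕ} {A : Finset (Exp n)}
    {K : Set (Fin n → ℝ)} (c : A → ℝ) (a : Fin m → (A → ℝ))
    (hspan : ∀ μ : Fin m → ℝ, (∀ u ∈ K, 0 ≤ evalA A (∑ i, μ i • a i) u) →
      (∑ i, μ i • a i) = 0) :
    Bornology.IsBounded (Set.range (cLam c a) ∩ PAcone A K) := by
  set V := Submodule.span ℝ (Set.range a)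
  have hrec : ∀ v : V, (∀ u : K, (evalALinear A u ∘ₗ V.subtype) v ≤ 0) → v = 0 := by
    rintro ⟨v, hv⟩ hle
    obtain ⟨μ, rfl⟩ := (Submodule.mem_span_range_iff_exists_fun ℝ).1 hv
    have hsum : ∑ i, (-μ i) • a i = -∑ i, μ i • a i := by
      simp only [neg_smul, Finset.sum_neg_distrib]
    have hneg : ∑ i, (-μ i) • a i = 0 := hspan _ fun u hu => by
      show 0 ≤ evalALinear A u _
      rw [hsum, map_neg]
      exact neg_nonneg.2 (hle ⟨u, hu⟩)
    ext1
    simpa [hsum] using hneg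
  obtain ⟨R, hR⟩ := isBounded_iff_forall_norm_le.1 <|
    isBounded_setOf_forall_le (fun u : K => evalALinear A u ∘ₗ V.subtype)
      (fun u => evalA A c u) hrec
  refine isBounded_iff_forall_norm_le.2 ⟨‖c‖ + R, ?_⟩
  rintro _ ⟨⟨lam, rfl⟩, hP⟩
  have hmem : ∑ i, lam i • a i ∈ V :=
    Submodule.sum_mem _ fun i _ => V.smul_mem _ (Submodule.subset_span ⟨i, rfl⟩)
  have hnorm : ‖∑ i, lam i • a i‖ ≤ R := hR ⟨_, hmem⟩ fun u => by
    have hcu := hP u u.2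
    simp only [cLam, evalA, Pi.sub_apply, sub_mul, Finset.sum_sub_distrib, sub_nonneg] at hcu
    exact hcu
  exact (norm_sub_le _ _).trans (by linarith)

theorem statement_17_general {n m : ℕ} {A : Finset (Exp n)} {K : Set (Fin n → ℝ)}
    (c : A → ℝ) (a : Fin m → (A → ℝ))
    (hspan : ∀ μ : Fin m → ℝ, (∀ u ∈ K, 0 ≤ evalA A (∑ i, μ i • a i) u) →
      (∑ i, μ i • a i) = 0) :
    ∃ T : ℝ, 0 < T ∧ ∀ lam : Fin m → ℝ, cLam c a lam ∈ PAcone A K →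
      Real.sqrt (∑ α : A, (cLam c a lam α) ^ 2) ≤ T := by
  obtain ⟨T, hT⟩ := isBounded_iff_forall_norm_le.1 <|
    (EuclideanSpace.equiv A ℝ).symm.lipschitz.isBounded_image
      (isBounded_range_cLam_inter_PAcone c a hspan)
  refine ⟨max T 1, by positivity, fun lam hlam => ?_⟩
  have hT' := hT _ ⟨_, ⟨⟨lam, rfl⟩, hlam⟩, rfl⟩
  simp only [EuclideanSpace.norm_eq, Real.norm_eq_abs, sq_abs] at hT'
  exact hT'.trans (le_max_left _ _)

/-- If no nonzero `a ∈ span{a_1,…,a_m}` is nonnegative on the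
nonempty compact set `K`, then `P_A(K) ∩ (c + span{a_1,…,a_m})` is bounded. -/
theorem statement_17 {n m : ℕ} (hn : 1 ≤ n) {A : Finset (Exp n)} (hA : A.Nonempty)
    {K : Set (Fin n → ℝ)} (hKne : K.Nonempty) (hKcpt : IsCompact K)
    (c : A → ℝ) (a : Fin m → (A → ℝ))
    (hspan : ∀ μ : Fin m → ℝ, (∀ u ∈ K, 0 ≤ evalA A (∑ i, μ i • a i) u) →
      (∑ i, μ i • a i) = 0) :
    ∃ T : ℝ, 0 < T ∧ ∀ lam : Fin m → ℝ, cLam c a lam ∈ PAcone A K →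
      Real.sqrt (∑ α : A, (cLam c a lam α) ^ 2) ≤ T :=
  statement_17_general c a hspan

end
end

section
/- Let K be the semialgebraic set defined by h and g, and suppose ρ − (x_1² + ⋯ + x_n²) ∈ I_{2k₁}(h) + Q_{k₁}(g) for some ρ > 0 and k₁ ∈ ℕ. Then for every k ≥ k₁, every w ∈ Φ_k(g) ∩ E_k(h), and every t ∈ {0, 1, …, k − k₁}, the Riesz functional satisfies L_w((x_1² + ⋯ + x_n²)^t) ≤ ρ^t · w_0, where w_0 is the entry of w indexed by the zero exponent. -/
open MeasureTheory MvPolynomial Finset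

noncomputable section

/-!
Write `ρ - ‖x‖² = a + b` with `a ∈ I_{2k₁}(h)` and `b ∈ Q_{k₁}(g)`, and let `t < k - k₁`.
Polarizing `L_w(hᵢ p²) = 0` gives `L_w(hᵢ q) = 0` for every `q` of low degree, so
`L_w(a ‖x‖^{2t}) = 0`; and `L_w(b ‖x‖^{2t}) ≥ 0` because `p² ‖x‖^{2t} = ∑ᵢ (p xᵢ)² ‖x‖^{2(t-1)}`
is again a sum of squares of low degree. Hence
`L_w(‖x‖^{2(t+1)}) = ρ L_w(‖x‖^{2t}) - L_w((ρ - ‖x‖²) ‖x‖^{2t}) ≤ ρ L_w(‖x‖^{2t})`,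
and induction on `t` gives the bound. The degree bookkeeping needs `2 deg p ≤ deg (∑ⱼ pⱼ²)`:
leading coefficients of squares are positive, so leading terms cannot cancel in a sum of squares.
-/

open scoped MonomialOrder

section SumOfSquaresDegree

variable {σ R : Type*} [CommRing R] [LinearOrder R] [IsStrictOrderedRing R]

lemma MonomialOrder.degree_le_degree_add_and_leadingCoeff_nonneg (m : MonomialOrder σ)
    {f g : MvPolynomial σ R} (hf : 0 ≤ m.leadingCoeff f) (hg : 0 ≤ m.leadingCoeff g) :
    m.degree f ≼[m] m.degree (f + g) ∧ 0 ≤ m.leadingCoeff (f + g) := by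
  rcases lt_trichotomy (m.toSyn (m.degree f)) (m.toSyn (m.degree g)) with hlt | heq | hgt
  · rw [m.degree_add_eq_right_of_lt hlt, add_comm, m.leadingCoeff_add_of_lt hlt]
    exact ⟨hlt.le, hg⟩
  · have hdeg : m.degree f = m.degree g := m.toSyn.injective heq
    by_cases hf0 : f = 0
    · simpa [hf0] using hg
    have hpos : 0 < m.leadingCoeff f + m.leadingCoeff g :=
      add_pos_of_pos_of_nonneg (hf.lt_of_ne (Ne.symm (m.leadingCoeff_ne_zero_iff.mpr hf0))) hg
    have hcoeff : (f + g).coeff (m.degree f) = m.leadingCoeff f + m.leadingCoeff g := by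
      rw [coeff_add, MonomialOrder.leadingCoeff, MonomialOrder.leadingCoeff, hdeg]
    have hle : m.degree f ≼[m] m.degree (f + g) :=
      m.le_degree (mem_support_iff.mpr (hcoeff ▸ hpos.ne'))
    have hsum : m.degree (f + g) = m.degree f :=
      m.toSyn.injective (le_antisymm (m.degree_add_le.trans (by rw [heq, sup_idem])) hle)
    refine ⟨hle, ?_⟩
    rw [MonomialOrder.leadingCoeff, hsum, hcoeff]
    exact hpos.le
  · rw [m.degree_add_of_lt hgt, m.leadingCoeff_add_of_lt hgt]
    exact ⟨le_rfl, hf⟩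

lemma MonomialOrder.leadingCoeff_nonneg_of_isSumSq (m : MonomialOrder σ)
    {s : MvPolynomial σ R} (hs : IsSumSq s) : 0 ≤ m.leadingCoeff s := by
  induction hs with
  | zero => simp
  | sq_add a _ ih =>
    exact (m.degree_le_degree_add_and_leadingCoeff_nonneg
      (by rw [m.leadingCoeff_mul]; exact mul_self_nonneg _) ih).2

variable [LinearOrder σ] [WellFoundedGT σ]

lemma totalDegree_le_totalDegree_add_of_isSumSq {f g : MvPolynomial σ R}
    (hf : IsSumSq f) (hg : IsSumSq g) : f.totalDegree ≤ (f + g).totalDegree :=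
  degLex_totalDegree_monotone (MonomialOrder.degLex.degree_le_degree_add_and_leadingCoeff_nonneg
    (MonomialOrder.degLex.leadingCoeff_nonneg_of_isSumSq hf)
    (MonomialOrder.degLex.leadingCoeff_nonneg_of_isSumSq hg)).1

lemma totalDegree_le_of_isSumSq_sq_add {a s : MvPolynomial σ R} (hs : IsSumSq s) :
    2 * a.totalDegree ≤ (a * a + s).totalDegree ∧ s.totalDegree ≤ (a * a + s).totalDegree := by
  refine ⟨?_, add_comm (a * a) s ▸
    totalDegree_le_totalDegree_add_of_isSumSq hs (IsSumSq.mul_self a)⟩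
  by_cases ha : a = 0
  · simp [ha]
  rw [two_mul, ← totalDegree_mul_of_isDomain ha ha]
  exact totalDegree_le_totalDegree_add_of_isSumSq (IsSumSq.mul_self a) hs

end SumOfSquaresDegree

section Riesz

variable {n : ℕ} (w : Exp n → ℝ)

lemma riesz_eq_sum_of_support_subset {p : MvPolynomial (Fin n) ℝ} {S : Finset (Fin n →₀ ℕ)}
    (hS : p.support ⊆ S) : riesz w p = ∑ d ∈ S, coeff d p * w d :=
  Finset.sum_subset hS fun d _ hd => by simp [notMem_support_iff.mp hd]

def rieszₗ : MvPolynomial (Fin n) ℝ →ₗ[ℝ] ℝ where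
  toFun := riesz w
  map_add' p q := by
    classical
    rw [riesz_eq_sum_of_support_subset w support_add,
      riesz_eq_sum_of_support_subset w subset_union_left,
      riesz_eq_sum_of_support_subset w subset_union_right, ← sum_add_distrib]
    simp only [coeff_add, add_mul]
  map_smul' c p := by
    rw [riesz_eq_sum_of_support_subset w support_smul, RingHom.id_apply, smul_eq_mul, riesz,
      mul_sum]
    simp only [coeff_smul, smul_eq_mul, mul_assoc]

lemma riesz_zero : riesz w 0 = 0 := map_zero (rieszₗ w)

lemma riesz_add (p q : MvPolynomial (Fin n) ℝ) : riesz w (p + q) = riesz w p + riesz w q :=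
  map_add (rieszₗ w) p q

lemma riesz_sub (p q : MvPolynomial (Fin n) ℝ) : riesz w (p - q) = riesz w p - riesz w q :=
  map_sub (rieszₗ w) p q

lemma riesz_smul (c : ℝ) (p : MvPolynomial (Fin n) ℝ) : riesz w (c • p) = c * riesz w p :=
  map_smul (rieszₗ w) c p

lemma riesz_sum {ι : Type*} (s : Finset ι) (f : ι → MvPolynomial (Fin n) ℝ) :
    riesz w (∑ i ∈ s, f i) = ∑ i ∈ s, riesz w (f i) :=
  map_sum (rieszₗ w) f s

lemma riesz_one : riesz w 1 = w 0 := by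
  simp [riesz, support_one]

end Riesz

def sumSqX (n : ℕ) : MvPolynomial (Fin n) ℝ := ∑ i : Fin n, X i ^ 2

lemma totalDegree_sumSqX_pow_le (n t : ℕ) : (sumSqX n ^ t).totalDegree ≤ 2 * t := by
  have hS : (sumSqX n).totalDegree ≤ 2 :=
    totalDegree_finsetSum_le fun i _ => (totalDegree_pow _ _).trans (by rw [totalDegree_X])
  have := totalDegree_pow (sumSqX n) t
  nlinarith

section Localizing

variable {n : ℕ} (w : Exp n → ℝ) {k : ℕ}

lemma riesz_mul_mul_eq_zero {q : MvPolynomial (Fin n) ℝ}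
    (hq : ∀ p, (q * p ^ 2).totalDegree ≤ 2 * k → riesz w (q * p ^ 2) = 0)
    {a b : MvPolynomial (Fin n) ℝ}
    (hab : q.totalDegree + 2 * max a.totalDegree b.totalDegree ≤ 2 * k) :
    riesz w (q * (a * b)) = 0 := by
  have hsq : ∀ p : MvPolynomial (Fin n) ℝ, p.totalDegree ≤ max a.totalDegree b.totalDegree →
      riesz w (q * p ^ 2) = 0 := fun p hp =>
    hq p ((totalDegree_mul _ _).trans (by have := totalDegree_pow p 2; omega))
  have hpolar : (4 : ℝ) • (q * (a * b)) = q * (a + b) ^ 2 - q * (a - b) ^ 2 := by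
    rw [smul_eq_C_mul, map_ofNat C 4]; ring
  have := congrArg (riesz w) hpolar
  rw [riesz_smul, riesz_sub, hsq _ (totalDegree_add a b), hsq _ (totalDegree_sub a b)] at this
  linarith

lemma riesz_mul_monomial_eq_zero {q : MvPolynomial (Fin n) ℝ}
    (hq : ∀ p, (q * p ^ 2).totalDegree ≤ 2 * k → riesz w (q * p ^ 2) = 0)
    {d : Fin n →₀ ℕ} (hd : q.totalDegree + d.degree < 2 * k) :
    riesz w (q * monomial d 1) = 0 := by
  obtain ⟨β, hβd, hβ⟩ := d.exists_le_degree_eq (d.degree / 2) (Nat.div_le_self _ _)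
  obtain ⟨γ, rfl⟩ := le_iff_exists_add.mp hβd
  rw [← mul_one (1 : ℝ), ← monomial_mul]
  apply riesz_mul_mul_eq_zero w hq
  rw [totalDegree_monomial _ one_ne_zero, totalDegree_monomial _ one_ne_zero]
  change q.totalDegree + 2 * max β.degree γ.degree ≤ 2 * k
  rw [map_add] at hd hβ
  omega

lemma riesz_mul_eq_zero {q : MvPolynomial (Fin n) ℝ}
    (hq : ∀ p, (q * p ^ 2).totalDegree ≤ 2 * k → riesz w (q * p ^ 2) = 0)
    {f : MvPolynomial (Fin n) ℝ} (hf : q.totalDegree + f.totalDegree < 2 * k) :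
    riesz w (q * f) = 0 := by
  rw [f.as_sum, mul_sum, riesz_sum]
  refine sum_eq_zero fun d hd => ?_
  rw [← mul_one (coeff d f), ← C_mul_monomial, mul_left_comm, ← smul_eq_C_mul, riesz_smul,
    riesz_mul_monomial_eq_zero w hq (hf.trans_le' ?_), mul_zero]
  exact Nat.add_le_add_left (le_totalDegree hd) _

lemma riesz_mul_sq_mul_sumSqX_pow_nonneg {G : MvPolynomial (Fin n) ℝ}
    (hG : ∀ p, (G * p ^ 2).totalDegree ≤ 2 * k → 0 ≤ riesz w (G * p ^ 2)) (t : ℕ)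
    {p : MvPolynomial (Fin n) ℝ} (hdeg : G.totalDegree + 2 * p.totalDegree + 2 * t ≤ 2 * k) :
    0 ≤ riesz w (G * p ^ 2 * sumSqX n ^ t) := by
  induction t generalizing p with
  | zero =>
    rw [pow_zero, mul_one]
    exact hG p ((totalDegree_mul _ _).trans (by have := totalDegree_pow p 2; omega))
  | succ t ih =>
    have hsplit :
        G * p ^ 2 * sumSqX n ^ (t + 1) = ∑ i, G * (p * X i) ^ 2 * sumSqX n ^ t := by
      rw [pow_succ' (sumSqX n) t, ← mul_assoc, sumSqX, mul_sum, sum_mul]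
      exact sum_congr rfl fun i _ => by ring
    rw [hsplit, riesz_sum]
    refine sum_nonneg fun i _ => ih ?_
    have := totalDegree_mul p (X i)
    rw [totalDegree_X] at this
    omega

lemma riesz_mul_isSumSq_mul_sumSqX_pow_nonneg {G : MvPolynomial (Fin n) ℝ}
    (hG : ∀ p, (G * p ^ 2).totalDegree ≤ 2 * k → 0 ≤ riesz w (G * p ^ 2)) (t : ℕ)
    {s : MvPolynomial (Fin n) ℝ} (hs : IsSumSq s)
    (hdeg : G.totalDegree + s.totalDegree + 2 * t ≤ 2 * k) :
    0 ≤ riesz w (G * s * sumSqX n ^ t) := by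
  induction hs with
  | zero => simp [riesz_zero]
  | sq_add a hs ih =>
    obtain ⟨ha, hs'⟩ := totalDegree_le_of_isSumSq_sq_add (a := a) hs
    rw [mul_add, add_mul, riesz_add, ← sq]
    exact add_nonneg (riesz_mul_sq_mul_sumSqX_pow_nonneg w hG t (p := a) (by omega)) (ih (by omega))

end Localizing

section QuadraticModule

variable {n m1 m2 : ℕ} {h : Fin m1 → MvPolynomial (Fin n) ℝ}
  {g : Fin m2 → MvPolynomial (Fin n) ℝ} {w : Exp n → ℝ} {k k₁ t : ℕ}

lemma riesz_mul_sumSqX_pow_eq_zero_of_mem_IhSet (hw : w ∈ ESet h k)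
    {a : MvPolynomial (Fin n) ℝ} (ha : a ∈ IhSet h k₁) (hkt : k₁ + t < k) :
    riesz w (a * sumSqX n ^ t) = 0 := by
  obtain ⟨q, hq, rfl⟩ := ha
  rw [sum_mul, riesz_sum]
  refine sum_eq_zero fun i _ => ?_
  rcases hq i with hqi | hqi
  · rw [hqi, mul_zero, zero_mul, riesz_zero]
  rw [mul_assoc]
  refine riesz_mul_eq_zero w (hw i) ?_
  have := (totalDegree_mul (q i) (sumSqX n ^ t)).trans
    (Nat.add_le_add_left (totalDegree_sumSqX_pow_le n t) _)
  omega

lemma riesz_mul_sumSqX_pow_nonneg_of_mem_QgSet (hw : w ∈ PhiSet g k)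
    {b : MvPolynomial (Fin n) ℝ} (hb : b ∈ QgSet g k₁) (hkt : k₁ + t ≤ k) :
    0 ≤ riesz w (b * sumSqX n ^ t) := by
  obtain ⟨σ₀, σ, hσ₀, hσ₀deg, hσ, rfl⟩ := hb
  rw [add_mul, sum_mul, riesz_add, riesz_sum]
  refine add_nonneg ?_ (sum_nonneg fun j _ => ?_)
  · simpa using riesz_mul_isSumSq_mul_sumSqX_pow_nonneg w (G := 1) (by simpa using hw.1) t
      hσ₀ (by rw [totalDegree_one]; omega)
  · obtain ⟨hσj, hσ0 | hσdeg⟩ := hσ j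
    · rw [hσ0, mul_zero, zero_mul, riesz_zero]
    · exact riesz_mul_isSumSq_mul_sumSqX_pow_nonneg w (hw.2 j) t hσj (by omega)

lemma riesz_mul_sumSqX_pow_nonneg_of_mem_IQSet (hw : w ∈ PhiSet g k ∩ ESet h k)
    {f : MvPolynomial (Fin n) ℝ} (hf : f ∈ IQSet h g k₁) (hkt : k₁ + t < k) :
    0 ≤ riesz w (f * sumSqX n ^ t) := by
  obtain ⟨a, ha, b, hb, rfl⟩ := hf
  rw [add_mul, riesz_add, riesz_mul_sumSqX_pow_eq_zero_of_mem_IhSet hw.2 ha hkt, zero_add]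
  exact riesz_mul_sumSqX_pow_nonneg_of_mem_QgSet hw.1 hb hkt.le

end QuadraticModule

theorem statement_19_general {n m1 m2 : ℕ}
    (h : Fin m1 → MvPolynomial (Fin n) ℝ) (g : Fin m2 → MvPolynomial (Fin n) ℝ)
    (ρ : ℝ) (hρ : 0 < ρ) (k₁ : ℕ)
    (hmem : (C ρ - ∑ i : Fin n, X i ^ 2) ∈ IQSet h g k₁)
    (k : ℕ) (w : Exp n → ℝ) (hw : w ∈ PhiSet g k ∩ ESet h k)
    (t : ℕ) (ht : t ≤ k - k₁) :
    riesz w ((∑ i : Fin n, X i ^ 2) ^ t) ≤ ρ ^ t * w 0 := by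
  change riesz w (sumSqX n ^ t) ≤ ρ ^ t * w 0
  induction t with
  | zero => rw [pow_zero, pow_zero, one_mul, riesz_one]
  | succ t ih =>
    have hsplit : sumSqX n ^ (t + 1) = ρ • sumSqX n ^ t - (C ρ - sumSqX n) * sumSqX n ^ t := by
      rw [smul_eq_C_mul]; ring
    have hrest : 0 ≤ riesz w ((C ρ - sumSqX n) * sumSqX n ^ t) :=
      riesz_mul_sumSqX_pow_nonneg_of_mem_IQSet hw hmem (by omega)
    rw [hsplit, riesz_sub, riesz_smul, pow_succ', mul_assoc]
    linarith [mul_le_mul_of_nonneg_left (ih (by omega)) hρ.le]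

/-- If `ρ - ‖x‖² ∈ I_{2k₁}(h) + Q_{k₁}(g)` with `ρ > 0`, then for
all `k ≥ k₁`, `w ∈ Φ_k(g) ∩ E_k(h)` and `t ≤ k - k₁`, one has
`L_w(‖x‖^{2t}) ≤ ρ^t w_0`. -/
theorem statement_19 {n m1 m2 : ℕ} (hn : 1 ≤ n)
    (h : Fin m1 → MvPolynomial (Fin n) ℝ) (g : Fin m2 → MvPolynomial (Fin n) ℝ)
    (ρ : ℝ) (hρ : 0 < ρ) (k₁ : ℕ)
    (hmem : (C ρ - ∑ i : Fin n, X i ^ 2) ∈ IQSet h g k₁)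
    (k : ℕ) (hk : k₁ ≤ k) (w : Exp n → ℝ) (hw : w ∈ PhiSet g k ∩ ESet h k)
    (t : ℕ) (ht : t ≤ k - k₁) :
    riesz w ((∑ i : Fin n, X i ^ 2) ^ t) ≤ ρ ^ t * w 0 :=
  statement_19_general h g ρ hρ k₁ hmem k w hw t ht

end
end
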